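/- arXiv:1902.09740 — 2 statements merged into one kernel-verified Lean document; each statement's English description precedes it below -/
import Mathlib

section
/- Fix k > 0, α ≥ 0 and a grid function m̂, and define T(m̃) = (3/(2k))·m̃ + m̂ × (Δ_h m̃) + α · m̂ × ( m̂ × (Δ_h m̃) ) for grid functions m̃. Then for any two grid functions m̃₁, m̃₂, writing δ = m̃₁ − m̃₂, one has the monotonicity identity ⟨ T(m̃₁) − T(m̃₂), −Δ_h δ ⟩ = (3/(2k))·‖∇_h δ‖₂² + α·‖ m̂ × (Δ_h δ) ‖₂². In particular ⟨ T(m̃₁) − T(m̃₂), −Δ_h δ ⟩ ≥ 0, so T is monotone with respect to the pairing against −Δ_h δ. -/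
/-!
The Neumann Laplacian is minus the difference quotient of the discrete gradient extended by zero
beyond the grid, so summation by parts gives `⟨f, -Δ_h g⟩ = ⟨∇_h f, ∇_h g⟩`. As `T` is linear,
`T m̃₁ - T m̃₂ = T δ`; pairing its three terms with `-Δ_h δ`, the first gives the gradient term by
summation by parts, the precession term `m̂ × Δ_h δ` is pointwise orthogonal to `Δ_h δ`, and the
scalar triple product turns `(m̂ × (m̂ × v)) · (-v)` into `|m̂ × v|²`.
-/

noncomputable section

open Finset

/-- Euclidean dot product on ℝ³. -/
def dot3 (a b : Fin 3 → ℝ) : ℝ := ∑ j, a j * b j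

/-- Euclidean norm on ℝ³. -/
def norm3 (a : Fin 3 → ℝ) : ℝ := Real.sqrt (dot3 a a)

/-- Cross product on ℝ³. -/
def cross3 (a b : Fin 3 → ℝ) : Fin 3 → ℝ :=
  ![a 1 * b 2 - a 2 * b 1, a 2 * b 0 - a 0 * b 2, a 0 * b 1 - a 1 * b 0]

/-- Mesh size `h = 1/N` of the uniform 1-D grid with `N` cells. -/
def gridh (N : ℕ) : ℝ := 1 / N

/-- Neumann discrete Laplacian on grid functions `{1,…,N} → ℝ³`. -/
def glap (N : ℕ) (f : ℕ → Fin 3 → ℝ) : ℕ → Fin 3 → ℝ := fun i =>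
  if i = 1 then ((gridh N) ^ 2)⁻¹ • (f 2 - f 1)
  else if i = N then ((gridh N) ^ 2)⁻¹ • (f (N - 1) - f N)
  else ((gridh N) ^ 2)⁻¹ • (f (i + 1) - (2 : ℝ) • f i + f (i - 1))

/-- Discrete gradient `(∇_h f)_i = (f_{i+1} − f_i)/h`. -/
def ggrad (N : ℕ) (f : ℕ → Fin 3 → ℝ) : ℕ → Fin 3 → ℝ := fun i =>
  (gridh N)⁻¹ • (f (i + 1) - f i)

/-- Discrete inner product `⟨f,g⟩ = h ∑_{i=1}^N f_i · g_i`. -/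
def gip (N : ℕ) (f g : ℕ → Fin 3 → ℝ) : ℝ :=
  gridh N * ∑ i ∈ Finset.Icc 1 N, dot3 (f i) (g i)

/-- Discrete `‖·‖₂` norm. -/
def gnorm2 (N : ℕ) (f : ℕ → Fin 3 → ℝ) : ℝ := Real.sqrt (gip N f f)

/-- Discrete inner product of gradients `⟨∇_h f, ∇_h g⟩ = h ∑_{i=1}^{N−1} (∇_h f)_i · (∇_h g)_i`. -/
def gipGrad (N : ℕ) (f g : ℕ → Fin 3 → ℝ) : ℝ :=
  gridh N * ∑ i ∈ Finset.Icc 1 (N - 1), dot3 (ggrad N f i) (ggrad N g i)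

/-- Discrete `‖∇_h ·‖₂` norm. -/
def gnormGrad (N : ℕ) (f : ℕ → Fin 3 → ℝ) : ℝ := Real.sqrt (gipGrad N f f)

/-- Discrete `‖·‖_∞` norm. -/
def gsup (N : ℕ) (f : ℕ → Fin 3 → ℝ) : ℝ := ⨆ i ∈ Finset.Icc 1 N, norm3 (f i)

/-- Discrete `‖∇_h ·‖_∞` norm. -/
def gsupGrad (N : ℕ) (f : ℕ → Fin 3 → ℝ) : ℝ :=
  ⨆ i ∈ Finset.Icc 1 (N - 1), norm3 (ggrad N f i)

open Matrix

lemma dot3_eq_dotProduct (a b : Fin 3 → ℝ) : dot3 a b = a ⬝ᵥ b := rfl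

lemma cross3_eq_crossProduct (a b : Fin 3 → ℝ) : cross3 a b = a ⨯₃ b := rfl

theorem cross_cross_self_dotProduct {R : Type*} [CommRing R] (a v : Fin 3 → R) :
    a ⨯₃ (a ⨯₃ v) ⬝ᵥ v = -(a ⨯₃ v ⬝ᵥ a ⨯₃ v) := by
  rw [dotProduct_comm, triple_product_permutation, triple_product_permutation, ← cross_anticomm a v,
    dotProduct_neg]

theorem sum_Icc_dotProduct_sub_by_parts {ι R : Type*} [Fintype ι] [CommRing R] (u w : ℕ → ι → R)
    (n : ℕ) :
    ∑ i ∈ Icc 1 (n + 1), u i ⬝ᵥ (w (i - 1) - w i)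
      = ∑ i ∈ Icc 1 n, (u (i + 1) - u i) ⬝ᵥ w i + u 1 ⬝ᵥ w 0 - u (n + 1) ⬝ᵥ w (n + 1) := by
  induction n with
  | zero => simp [dotProduct_sub]
  | succ n ih =>
    rw [sum_Icc_succ_top (by omega), ih, sum_Icc_succ_top (by omega)]
    simp only [Nat.add_sub_cancel, dotProduct_sub, sub_dotProduct]
    ring

-- Zero flux through the two ends of the grid is the Neumann boundary condition.
def ggradExt (N : ℕ) (f : ℕ → Fin 3 → ℝ) (i : ℕ) : Fin 3 → ℝ :=
  if i = 0 ∨ N ≤ i then 0 else ggrad N f i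

lemma neg_glap_eq_smul_sub_ggradExt {N i : ℕ} (hN : 2 ≤ N) (hi : i ∈ Icc 1 N)
    (f : ℕ → Fin 3 → ℝ) :
    -glap N f i = (gridh N)⁻¹ • (ggradExt N f (i - 1) - ggradExt N f i) := by
  obtain ⟨hi1, hiN⟩ := mem_Icc.mp hi
  rcases eq_or_ne i 1 with rfl | hi1'
  · simp only [glap, ↓reduceIte, ggradExt, tsub_self, true_or, one_ne_zero,
      show ¬N ≤ 1 by omega, or_self, ggrad, Nat.reduceAdd, zero_sub, smul_neg, neg_inj]
    module
  have hpred : ¬(i - 1 = 0 ∨ N ≤ i - 1) := by omega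
  rcases eq_or_ne i N with rfl | hiN'
  · simp only [glap, ggradExt, ggrad, if_neg hi1', hpred, le_refl, or_true, if_true, if_false,
      Nat.sub_add_cancel hi1]
    module
  · simp only [glap, ggradExt, ggrad, if_neg hi1', if_neg hiN', hpred, show ¬(i = 0 ∨ N ≤ i) by omega,
      if_false, Nat.sub_add_cancel hi1]
    module

lemma gip_neg_glap {N : ℕ} (hN : 2 ≤ N) (f g : ℕ → Fin 3 → ℝ) :
    gip N f (fun i => -glap N g i) = gipGrad N f g := by
  obtain ⟨n, rfl⟩ : ∃ n, N = n + 1 := ⟨N - 1, by omega⟩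
  have hflux : ∀ i ∈ Icc 1 n, ggradExt (n + 1) g i = ggrad (n + 1) g i := fun i hi => by
    rw [ggradExt, if_neg (by grind)]
  have hbdry : ggradExt (n + 1) g 0 = 0 ∧ ggradExt (n + 1) g (n + 1) = 0 := by
    simp [ggradExt]
  calc gip (n + 1) f (fun i => -glap (n + 1) g i)
      = gridh (n + 1) * ((gridh (n + 1))⁻¹ *
          ∑ i ∈ Icc 1 (n + 1), f i ⬝ᵥ (ggradExt (n + 1) g (i - 1) - ggradExt (n + 1) g i)) := by
        rw [gip]
        congr 1
        rw [mul_sum]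
        exact sum_congr rfl fun i hi => by
          rw [dot3_eq_dotProduct, neg_glap_eq_smul_sub_ggradExt hN hi, dotProduct_smul, smul_eq_mul]
    _ = gridh (n + 1) * ((gridh (n + 1))⁻¹ *
          ∑ i ∈ Icc 1 n, (f (i + 1) - f i) ⬝ᵥ ggrad (n + 1) g i) := by
        rw [sum_Icc_dotProduct_sub_by_parts, hbdry.1, hbdry.2,
          sum_congr rfl fun i hi => by rw [hflux i hi]]
        simp only [dotProduct_zero, add_zero, sub_zero]
    _ = gipGrad (n + 1) f g := by
        simp only [gipGrad, ggrad, dot3_eq_dotProduct, Nat.add_sub_cancel, mul_sum, smul_dotProduct,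
          smul_eq_mul]

lemma gridh_nonneg (N : ℕ) : 0 ≤ gridh N := by
  unfold gridh
  positivity

lemma sq_gnorm2 (N : ℕ) (f : ℕ → Fin 3 → ℝ) : gnorm2 N f ^ 2 = gip N f f :=
  Real.sq_sqrt <| mul_nonneg (gridh_nonneg N) <| sum_nonneg fun _ _ => dotProduct_self_star_nonneg _

lemma sq_gnormGrad (N : ℕ) (f : ℕ → Fin 3 → ℝ) : gnormGrad N f ^ 2 = gipGrad N f f :=
  Real.sq_sqrt <| mul_nonneg (gridh_nonneg N) <| sum_nonneg fun _ _ => dotProduct_self_star_nonneg _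

lemma glap_sub (N : ℕ) (f g : ℕ → Fin 3 → ℝ) : glap N (f - g) = glap N f - glap N g := by
  funext i
  simp only [glap, Pi.sub_apply]
  split_ifs <;> module

def semiImplicitOp (N : ℕ) (c α : ℝ) (mhat mt : ℕ → Fin 3 → ℝ) (i : ℕ) : Fin 3 → ℝ :=
  c • mt i + cross3 (mhat i) (glap N mt i) + α • cross3 (mhat i) (cross3 (mhat i) (glap N mt i))

lemma semiImplicitOp_sub_apply (N : ℕ) (c α : ℝ) (mhat f g : ℕ → Fin 3 → ℝ) (i : ℕ) :
    semiImplicitOp N c α mhat f i - semiImplicitOp N c α mhat g i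
      = semiImplicitOp N c α mhat (f - g) i := by
  simp only [semiImplicitOp, cross3_eq_crossProduct, glap_sub, Pi.sub_apply, map_sub]
  module

lemma semiImplicitOp_dotProduct_neg_glap (N : ℕ) (c α : ℝ) (mhat f : ℕ → Fin 3 → ℝ) (i : ℕ) :
    semiImplicitOp N c α mhat f i ⬝ᵥ -glap N f i
      = c * (f i ⬝ᵥ -glap N f i)
        + α * (cross3 (mhat i) (glap N f i) ⬝ᵥ cross3 (mhat i) (glap N f i)) := by
  have hcross : mhat i ⨯₃ glap N f i ⬝ᵥ glap N f i = 0 := by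
    rw [dotProduct_comm, dot_cross_self]
  simp only [semiImplicitOp, cross3_eq_crossProduct, dotProduct_neg, add_dotProduct,
    smul_dotProduct, smul_eq_mul, hcross, cross_cross_self_dotProduct]
  ring

lemma gip_semiImplicitOp_neg_glap {N : ℕ} (hN : 2 ≤ N) (c α : ℝ) (mhat f : ℕ → Fin 3 → ℝ) :
    gip N (semiImplicitOp N c α mhat f) (fun i => -glap N f i)
      = c * gipGrad N f f
        + α * gip N (fun i => cross3 (mhat i) (glap N f i)) (fun i => cross3 (mhat i) (glap N f i)) := by
  rw [← gip_neg_glap hN]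
  simp only [gip, dot3_eq_dotProduct, semiImplicitOp_dotProduct_neg_glap, sum_add_distrib, ← mul_sum]
  ring

/-- monotonicity identity for the semi-implicit operator
`T(m̃) = (3/(2k))·m̃ + m̂ × Δ_h m̃ + α·m̂ × (m̂ × Δ_h m̃)`:
with `δ = m̃₁ − m̃₂`, one has
`⟨T m̃₁ − T m̃₂, −Δ_h δ⟩ = (3/(2k))‖∇_h δ‖₂² + α‖m̂ × Δ_h δ‖₂² ≥ 0`. -/
theorem semi_implicit_operator_monotone
    (N : ℕ) (hN : 2 ≤ N) (k α : ℝ) (hk : 0 < k) (hα : 0 ≤ α)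
    (mhat mt₁ mt₂ : ℕ → Fin 3 → ℝ)
    (T : (ℕ → Fin 3 → ℝ) → (ℕ → Fin 3 → ℝ))
    (hT : ∀ mt : ℕ → Fin 3 → ℝ, ∀ i : ℕ,
      T mt i = (3 / (2 * k)) • mt i + cross3 (mhat i) (glap N mt i)
        + α • cross3 (mhat i) (cross3 (mhat i) (glap N mt i)))
    (δ : ℕ → Fin 3 → ℝ) (hδ : ∀ i, δ i = mt₁ i - mt₂ i) :
    gip N (fun i => T mt₁ i - T mt₂ i) (fun i => - glap N δ i) =
      (3 / (2 * k)) * (gnormGrad N δ) ^ 2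
        + α * (gnorm2 N (fun i => cross3 (mhat i) (glap N δ i))) ^ 2 ∧
    0 ≤ gip N (fun i => T mt₁ i - T mt₂ i) (fun i => - glap N δ i) := by
  obtain rfl : T = semiImplicitOp N (3 / (2 * k)) α mhat := funext fun mt => funext (hT mt)
  obtain rfl : δ = mt₁ - mt₂ := funext hδ
  simp only [semiImplicitOp_sub_apply, gip_semiImplicitOp_neg_glap hN, ← sq_gnormGrad, ← sq_gnorm2,
    true_and]
  positivity
end
end

section
/- Second-order consistency of the discrete Laplacian at the boundary cell with the corrected ghost value: there is an absolute constant C > 0 with the following property. Let 0 < h ≤ 1, let f : ℝ → ℝ be five times continuously differentiable on [−h/2, 3h/2] with f'(0) = 0 and with |f⁗| ≤ M₁ and |f⁽⁵⁾| ≤ M₁ on [−h/2, 3h/2], and let φ : ℝ → ℝ be three times continuously differentiable on [−h/2, 3h/2] with φ'(0) = −(1/24)·f'''(0) and with |φ''| ≤ M₂ and |φ'''| ≤ M₂ there. Set g = f + h²·φ and define the boundary-cell discrete Laplacian using the ghost value g(h/2) in place of g(−h/2): L := ( g(3h/2) − 2·g(h/2) + g(h/2) )/h². Then | L − f''(h/2)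 | ≤ C·(M₁ + M₂)·h². -/
/-!
Taylor-expand `f` about `h/2` and its first three derivatives about the wall `0`. With
`f'(0) = 0`, the one-sided stencil `(f(3h/2) - f(h/2))/h²` reproduces `f''(h/2)` only up to
the first-order term `h·f'''(0)/24`. The correction `h²φ` adds `φ(3h/2) - φ(h/2) = h·φ'(0) + O(h²)`,
and `φ'(0) = -f'''(0)/24` cancels that term exactly.
-/

open Set

section IteratedDerivWithin

variable {𝕜 F : Type*} [NontriviallyNormedField 𝕜] [NormedAddCommGroup F] [NormedSpace 𝕜 F]

theorem iteratedDerivWithin_iteratedDerivWithin (k m : ℕ) (f : 𝕜 → F) (s : Set 𝕜) :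
    iteratedDerivWithin k (iteratedDerivWithin m f s) s = iteratedDerivWithin (k + m) f s := by
  induction k with
  | zero => simp
  | succ k ih => rw [iteratedDerivWithin_succ, ih, Nat.add_right_comm, iteratedDerivWithin_succ]

theorem iteratedDerivWithin_subset {f : 𝕜 → F} {s t : Set 𝕜} {x : 𝕜} {n : ℕ}
    (st : s ⊆ t) (hs : UniqueDiffOn 𝕜 s) (ht : UniqueDiffOn 𝕜 t) (hf : ContDiffOn 𝕜 n f t)
    (hx : x ∈ s) : iteratedDerivWithin n f s x = iteratedDerivWithin n f t x := by
  simp only [iteratedDerivWithin_eq_iteratedFDerivWithin,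
    iteratedFDerivWithin_subset st hs ht hf hx]

theorem ContDiffOn.iteratedDerivWithin {f : 𝕜 → F} {s : Set 𝕜} {m n : ℕ}
    (hf : ContDiffOn 𝕜 (n + m : ℕ) f s) (hs : UniqueDiffOn 𝕜 s) :
    ContDiffOn 𝕜 n (iteratedDerivWithin m f s) s := by
  induction m generalizing n with
  | zero => simpa using hf
  | succ m ih =>
    rw [iteratedDerivWithin_succ]
    exact (ih (n := n + 1) (by rwa [Nat.add_right_comm])).derivWithin hs (by push_cast; rfl)

end IteratedDerivWithin

theorem abs_iteratedDerivWithin_sub_taylor_le {f : ℝ → ℝ} {I : Set ℝ} {a x M : ℝ} (m n : ℕ)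
    (hI : UniqueDiffOn ℝ I) (hax : a < x) (hsub : Icc a x ⊆ I)
    (hf : ContDiffOn ℝ (n + 1 + m : ℕ) f I)
    (hM : ∀ y ∈ Icc a x, |iteratedDerivWithin (n + 1 + m) f I y| ≤ M) :
    |iteratedDerivWithin m f I x - ∑ k ∈ Finset.range (n + 1),
        (x - a) ^ k / (k.factorial : ℝ) * iteratedDerivWithin (k + m) f I a|
      ≤ M * (x - a) ^ (n + 1) / (n.factorial : ℝ) := by
  have hg : ContDiffOn ℝ (n + 1 : ℕ) (iteratedDerivWithin m f I) I := hf.iteratedDerivWithin hI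
  have hrestrict : ∀ k ≤ n + 1, ∀ y ∈ Icc a x,
      iteratedDerivWithin k (iteratedDerivWithin m f I) (Icc a x) y =
        iteratedDerivWithin (k + m) f I y := fun k hk y hy => by
    rw [iteratedDerivWithin_subset hsub (uniqueDiffOn_Icc hax) hI
      (hg.of_le (by exact_mod_cast hk)) hy, iteratedDerivWithin_iteratedDerivWithin]
  have hbound := taylor_mean_remainder_bound hax.le (hg.mono hsub) (right_mem_Icc.2 hax.le)
    fun y hy => by rw [Real.norm_eq_abs, hrestrict _ le_rfl y hy]; exact hM y hy
  rw [Real.norm_eq_abs, taylor_within_apply] at hbound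
  convert hbound using 3
  refine Finset.sum_congr rfl fun k hk => ?_
  rw [smul_eq_mul, hrestrict k (Finset.mem_range.1 hk).le a (left_mem_Icc.2 hax.le)]
  ring

theorem abs_neumann_stencil_error_le_of_taylor {h M u₀ u₁ d₁ d₂ d₃ e₂ e₃ : ℝ} (hh : 0 < h)
    (h0 : |u₁ - (u₀ + h * d₁ + h ^ 2 / 2 * d₂ + h ^ 3 / 6 * d₃)| ≤ M * h ^ 4 / 6)
    (h1 : |d₁ - (h / 2 * e₂ + (h / 2) ^ 2 / 2 * e₃)| ≤ M * (h / 2) ^ 3 / 2)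
    (h2 : |d₂ - (e₂ + h / 2 * e₃)| ≤ M * (h / 2) ^ 2)
    (h3 : |d₃ - e₃| ≤ M * (h / 2)) :
    |(u₁ - u₀) / h ^ 2 - d₂ - h / 24 * e₃| ≤ 7 / 16 * M * h ^ 2 := by
  set R₀ := u₁ - (u₀ + h * d₁ + h ^ 2 / 2 * d₂ + h ^ 3 / 6 * d₃)
  set R₁ := d₁ - (h / 2 * e₂ + (h / 2) ^ 2 / 2 * e₃)
  set R₂ := d₂ - (e₂ + h / 2 * e₃)
  set R₃ := d₃ - e₃
  have hh2 : 0 < h ^ 2 := by positivity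
  -- Because the interior expansions are centred at h/2, the e₂ terms cancel and the e₃ terms
  -- add up to exactly h³/24.
  have key : (u₁ - u₀) / h ^ 2 - d₂ - h / 24 * e₃
      = (R₀ + h * R₁ - h ^ 2 / 2 * R₂ + h ^ 3 / 6 * R₃) / h ^ 2 := by
    field_simp
    ring
  rw [key, abs_div, abs_of_pos hh2, div_le_iff₀ hh2]
  calc |R₀ + h * R₁ - h ^ 2 / 2 * R₂ + h ^ 3 / 6 * R₃|
      ≤ |R₀| + h * |R₁| + h ^ 2 / 2 * |R₂| + h ^ 3 / 6 * |R₃| := by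
        have t₁ := abs_add_le (R₀ + h * R₁ - h ^ 2 / 2 * R₂) (h ^ 3 / 6 * R₃)
        have t₂ := abs_sub (R₀ + h * R₁) (h ^ 2 / 2 * R₂)
        have t₃ := abs_add_le R₀ (h * R₁)
        simp only [abs_mul, abs_div, abs_pow, abs_of_pos hh, abs_two,
          abs_of_pos (by norm_num : (0:ℝ) < 6)] at t₁ t₂ t₃
        linarith
    _ ≤ M * h ^ 4 / 6 + h * (M * (h / 2) ^ 3 / 2) + h ^ 2 / 2 * (M * (h / 2) ^ 2)
        + h ^ 3 / 6 * (M * (h / 2)) := by gcongr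
    _ = 7 / 16 * M * h ^ 2 * h ^ 2 := by ring

theorem abs_sub_sub_mul_derivWithin_le {φ : ℝ → ℝ} {I : Set ℝ} {a b x M : ℝ}
    (hI : UniqueDiffOn ℝ I) (hab : a < b) (hbx : b < x) (hsub : Icc a x ⊆ I)
    (hφ : ContDiffOn ℝ 2 φ I) (hM : ∀ y ∈ Icc a x, |iteratedDerivWithin 2 φ I y| ≤ M) :
    |φ x - φ b - (x - b) * derivWithin φ I a| ≤ M * (x - b) * (x - a) := by
  have hvalue := abs_iteratedDerivWithin_sub_taylor_le 0 1 hI hbx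
    ((Icc_subset_Icc hab.le le_rfl).trans hsub) hφ
    fun y hy => hM y (Icc_subset_Icc hab.le le_rfl hy)
  have hslope := abs_iteratedDerivWithin_sub_taylor_le 1 0 hI hab
    ((Icc_subset_Icc le_rfl hbx.le).trans hsub) hφ
    fun y hy => hM y (Icc_subset_Icc le_rfl hbx.le hy)
  norm_num [Finset.sum_range_succ, iteratedDerivWithin_one] at hvalue hslope
  calc |φ x - φ b - (x - b) * derivWithin φ I a|
      = |(φ x - (φ b + (x - b) * derivWithin φ I b))
          + (x - b) * (derivWithin φ I b - derivWithin φ I a)| := by ring_nf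
    _ ≤ M * (x - b) ^ 2 + (x - b) * (M * (b - a)) := by
      refine (abs_add_le _ _).trans (add_le_add hvalue ?_)
      rw [abs_mul, abs_of_pos (sub_pos.2 hbx)]
      gcongr
    _ = M * (x - b) * (x - a) := by ring

theorem abs_neumann_stencil_error_le {f : ℝ → ℝ} {I : Set ℝ} {h M : ℝ}
    (hI : UniqueDiffOn ℝ I) (hh : 0 < h) (hsub : Icc 0 (3 * h / 2) ⊆ I)
    (hf : ContDiffOn ℝ 4 f I) (hf0 : derivWithin f I 0 = 0)
    (hM : ∀ y ∈ Icc 0 (3 * h / 2), |iteratedDerivWithin 4 f I y| ≤ M) :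
    |(f (3 * h / 2) - f (h / 2)) / h ^ 2 - iteratedDerivWithin 2 f I (h / 2)
        - h / 24 * iteratedDerivWithin 3 f I 0| ≤ 7 / 16 * M * h ^ 2 := by
  have hc : 0 < h / 2 := by positivity
  have hsub_half : Icc 0 (h / 2) ⊆ I := (Icc_subset_Icc le_rfl (by linarith)).trans hsub
  have hM_half : ∀ y ∈ Icc 0 (h / 2), |iteratedDerivWithin 4 f I y| ≤ M :=
    fun y hy => hM y (Icc_subset_Icc le_rfl (by linarith) hy)
  have h0 := abs_iteratedDerivWithin_sub_taylor_le 0 3 hI (by linarith)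
    ((Icc_subset_Icc hc.le le_rfl).trans hsub) hf
    fun y hy => hM y (Icc_subset_Icc hc.le le_rfl hy)
  have h1 := abs_iteratedDerivWithin_sub_taylor_le 1 2 hI hc hsub_half hf hM_half
  have h2 := abs_iteratedDerivWithin_sub_taylor_le 2 1 hI hc hsub_half hf hM_half
  have h3 := abs_iteratedDerivWithin_sub_taylor_le 3 0 hI hc hsub_half hf hM_half
  norm_num [Finset.sum_range_succ, iteratedDerivWithin_one, Nat.factorial, hf0] at h0 h1 h2 h3
  rw [show 3 * h / 2 - h / 2 = h by ring] at h0
  exact abs_neumann_stencil_error_le_of_taylor hh h0 h1 h2 h3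

/-- second-order consistency of the boundary-cell discrete Laplacian with the
corrected ghost value: with `g = f + h²·φ` as in the corrected profile and
`L = (g(3h/2) − 2g(h/2) + g(h/2))/h²` (the ghost value `g(−h/2)` replaced by `g(h/2)`),
one has `|L − f''(h/2)| ≤ C·(M₁ + M₂)·h²` for an absolute constant `C`. -/
theorem boundary_cell_laplacian_consistency :
    ∃ C > (0:ℝ), ∀ h : ℝ, 0 < h → h ≤ 1 → ∀ f φ : ℝ → ℝ, ∀ M₁ M₂ : ℝ,
      ContDiffOn ℝ 5 f (Set.Icc (-(h / 2)) (3 * h / 2)) →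
      derivWithin f (Set.Icc (-(h / 2)) (3 * h / 2)) 0 = 0 →
      (∀ s ∈ Set.Icc (-(h / 2)) (3 * h / 2),
        |iteratedDerivWithin 4 f (Set.Icc (-(h / 2)) (3 * h / 2)) s| ≤ M₁ ∧
        |iteratedDerivWithin 5 f (Set.Icc (-(h / 2)) (3 * h / 2)) s| ≤ M₁) →
      ContDiffOn ℝ 3 φ (Set.Icc (-(h / 2)) (3 * h / 2)) →
      derivWithin φ (Set.Icc (-(h / 2)) (3 * h / 2)) 0 =
        -(1 / 24) * iteratedDerivWithin 3 f (Set.Icc (-(h / 2)) (3 * h / 2)) 0 →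
      (∀ s ∈ Set.Icc (-(h / 2)) (3 * h / 2),
        |iteratedDerivWithin 2 φ (Set.Icc (-(h / 2)) (3 * h / 2)) s| ≤ M₂ ∧
        |iteratedDerivWithin 3 φ (Set.Icc (-(h / 2)) (3 * h / 2)) s| ≤ M₂) →
      |((f (3 * h / 2) + h ^ 2 * φ (3 * h / 2)) - 2 * (f (h / 2) + h ^ 2 * φ (h / 2))
            + (f (h / 2) + h ^ 2 * φ (h / 2))) / h ^ 2
          - iteratedDerivWithin 2 f (Set.Icc (-(h / 2)) (3 * h / 2)) (h / 2)|
        ≤ C * (M₁ + M₂) * h ^ 2 := by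
  refine ⟨3 / 2, by norm_num, fun h hh _ f φ M₁ M₂ hf hf0 hfM hφ hφ0 hφM => ?_⟩
  set I := Icc (-(h / 2)) (3 * h / 2)
  have hI : UniqueDiffOn ℝ I := uniqueDiffOn_Icc (by linarith)
  have hsub : Icc 0 (3 * h / 2) ⊆ I := Icc_subset_Icc (by linarith) le_rfl
  have hM₁ : 0 ≤ M₁ := (abs_nonneg _).trans (hfM 0 (hsub ⟨le_rfl, by linarith⟩)).1
  have hf_error := abs_neumann_stencil_error_le hI hh hsub (hf.of_le (by norm_num)) hf0
    fun y hy => (hfM y (hsub hy)).1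
  have hφ_error := abs_sub_sub_mul_derivWithin_le hI (half_pos hh) (by linarith) hsub
    (hφ.of_le (by norm_num)) fun y hy => (hφM y (hsub hy)).1
  rw [hφ0] at hφ_error
  calc _ = |((f (3 * h / 2) - f (h / 2)) / h ^ 2 - iteratedDerivWithin 2 f I (h / 2)
          - h / 24 * iteratedDerivWithin 3 f I 0)
        + (φ (3 * h / 2) - φ (h / 2)
          - (3 * h / 2 - h / 2) * (-(1 / 24) * iteratedDerivWithin 3 f I 0))| := by
        congr 1
        field_simp
        ring
    _ ≤ 7 / 16 * M₁ * h ^ 2 + M₂ * (3 * h / 2 - h / 2) * (3 * h / 2 - 0) :=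
        (abs_add_le _ _).trans (add_le_add hf_error hφ_error)
    _ ≤ 3 / 2 * (M₁ + M₂) * h ^ 2 := by nlinarith
end
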